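/- arXiv:1908.00436 — 8 statements merged into one kernel-verified Lean document; each statement's English description precedes it below -/
import Mathlib

section
/- Let N > 3, F_B > 0, k ≥ 1, f_0 ≥ 0. If f_0 < (F_B/k)·(2/(N-1)), then f_0 < F_B/k, and every deviation cost c(a) = a·F_B + (N-2-a)·k·f_0 - a·(a-1)·k·f_0/2 with integer 1 ≤ a ≤ N-2 exceeds c(0) = (N-2)·k·f_0, so the star is a Nash equilibrium. -/
theorem star_is_NE
    (N : ℕ) (hN : 3 < N) (F_B k f0 : ℝ) (hF : 0 < F_B) (hk : 1 ≤ k) (hf : 0 ≤ f0)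
    (c : ℝ → ℝ)
    (hc : ∀ a : ℝ, c a = a * F_B + ((N : ℝ) - 2 - a) * k * f0 - a * (a - 1) * k * f0 / 2)
    (hf0 : f0 < (F_B / k) * (2 / ((N : ℝ) - 1))) :
    f0 < F_B / k ∧ f0 < (F_B / k) * (2 / ((N : ℝ) - 1)) ∧
    (∀ a : ℤ, 1 ≤ a → (a : ℝ) ≤ (N : ℝ) - 2 → c 0 < c (a : ℝ)) := by
  have hk0 : (0 : ℝ) < k := lt_of_lt_of_le one_pos hk
  have hNr : (4 : ℝ) ≤ (N : ℝ) := by exact_mod_cast hN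
  have hN1 : (0 : ℝ) < (N : ℝ) - 1 := by linarith
  have key : f0 * (k * ((N : ℝ) - 1)) < F_B * 2 := by
    rw [div_mul_div_comm] at hf0
    exact (lt_div_iff₀ (by positivity)).mp hf0
  refine ⟨?_, hf0, ?_⟩
  · rw [lt_div_iff₀ hk0]
    nlinarith
  · intro a ha haN
    have ha' : (1 : ℝ) ≤ (a : ℝ) := by exact_mod_cast ha
    rw [hc, hc]
    nlinarith [key, mul_nonneg (mul_nonneg hk0.le hf) (by linarith : (0:ℝ) ≤ (N:ℝ) - 2 - (a:ℝ)),
      mul_nonneg (mul_nonneg hk0.le hf) (sub_nonneg.mpr ha'),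
      mul_pos hF (by linarith : (0:ℝ) < (a:ℝ)),
      mul_le_mul_of_nonneg_right (by linarith : (a:ℝ) + 1 ≤ (N:ℝ) - 1) (mul_nonneg hk0.le hf)]
end

section
/- Let N > 3, F_B > 0, k ≥ 1, f_0 ≥ 0. With C = (N-2)·F_B + k·f_0 - (N-2)·(N-3)·k·f_0/2 and c(b) = b·F_B + k·f_0 + (N-2-b)·2k·f_0 - b·(b-1)·k·f_0/2, we have C < c(N-3) if and only if f_0 > (F_B/k)·(1/(N-1)). -/
theorem two_center_star_deviationA_corner_top
    (N : ℕ) (hN : 3 < N) (F_B k f0 : ℝ) (hF : 0 < F_B) (hk : 1 ≤ k) (hf : 0 ≤ f0)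
    (C : ℝ) (hC : C = ((N : ℝ) - 2) * F_B + k * f0 - ((N : ℝ) - 2) * ((N : ℝ) - 3) * k * f0 / 2)
    (c : ℝ → ℝ)
    (hc : ∀ b : ℝ, c b = b * F_B + k * f0 + ((N : ℝ) - 2 - b) * 2 * k * f0
        - b * (b - 1) * k * f0 / 2) :
    C < c ((N : ℝ) - 3) ↔ f0 > (F_B / k) * (1 / ((N : ℝ) - 1)) := by
  have hn : (4 : ℝ) ≤ (N : ℝ) := by exact_mod_cast hN
  have hk0 : (0 : ℝ) < k := lt_of_lt_of_le one_pos hk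
  have hN1 : (0 : ℝ) < (N : ℝ) - 1 := by linarith
  rw [hC, hc, gt_iff_lt, div_mul_div_comm, mul_one, div_lt_iff₀ (by positivity)]
  constructor
  · intro h; nlinarith
  · intro h; nlinarith
end

section
/- Let N > 3, F_B > 0, k ≥ 1, f_0 ≥ 0. In the two-center star, an outer node's cost is D = (N-3)·k·f_0 - 2k·f_0/(N-2), and the deviation cost is d(b) = b·F_B + (N-3-b)·k·f_0 - 2k·f_0/(N-2) - b·(b-1)·k·f_0/3. Then D < d(1) iff f_0 < F_B/k, and D < d(N-3) iff f_0 < (F_B/k)·(3/(N-1)). -/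
theorem two_center_star_deviationC
    (N : ℕ) (hN : 3 < N) (F_B k f0 : ℝ) (hF : 0 < F_B) (hk : 1 ≤ k) (hf : 0 ≤ f0)
    (D : ℝ) (hD : D = ((N : ℝ) - 3) * k * f0 - 2 * k * f0 / ((N : ℝ) - 2))
    (d : ℝ → ℝ)
    (hd : ∀ b : ℝ, d b = b * F_B + ((N : ℝ) - 3 - b) * k * f0 - 2 * k * f0 / ((N : ℝ) - 2)
        - b * (b - 1) * k * f0 / 3) :
    (D < d 1 ↔ f0 < F_B / k) ∧
    (D < d ((N : ℝ) - 3) ↔ f0 < (F_B / k) * (3 / ((N : ℝ) - 1))) := by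
  have hk0 : (0:ℝ) < k := lt_of_lt_of_le one_pos hk
  have hN4 : (4:ℝ) ≤ (N:ℝ) := by exact_mod_cast hN
  have hN1 : (0:ℝ) < (N:ℝ) - 1 := by linarith
  have hN3 : (0:ℝ) < (N:ℝ) - 3 := by linarith
  subst hD
  rw [hd 1, hd ((N:ℝ) - 3)]
  constructor
  · rw [lt_div_iff₀ hk0]
    constructor <;> intro h <;> nlinarith
  · rw [div_mul_div_comm, lt_div_iff₀ (by positivity)]
    constructor <;> intro h <;> nlinarith [mul_pos hN3 hF]
end

section
/- Let N > 3 and 2 ≤ c ≤ N/2 be naturals, d = N - c, F_B > 0, k ≥ 1, f_0 ≥ 0. In the complete bipartite graph K_{c,d}, a center's cost is C = d·F_B + (c-1)·k·f_0 - d·(d-1)·k·f_0/c, and the cost of deviating to b ∈ [1, d-1] outer channels is c_A(b) = b·F_B + (c-1)·k·f_0 + (d-b)·2k·f_0 - b·(b-1)·k·f_0/c. Then C < c_A(1) if and only if f_0 > (F_B/k)·(c/(N+c)). -/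
theorem bipartite_deviationA_corner_one
    (N c : ℕ) (hN : 3 < N) (hc2 : 2 ≤ c) (hcN : 2 * c ≤ N)
    (F_B k f0 : ℝ) (hF : 0 < F_B) (hk : 1 ≤ k) (hf : 0 ≤ f0)
    (d : ℝ) (hd : d = (N : ℝ) - (c : ℝ))
    (C : ℝ) (hC : C = d * F_B + ((c : ℝ) - 1) * k * f0 - d * (d - 1) * k * f0 / (c : ℝ))
    (cA : ℝ → ℝ)
    (hcA : ∀ b : ℝ, cA b = b * F_B + ((c : ℝ) - 1) * k * f0 + (d - b) * 2 * k * f0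
        - b * (b - 1) * k * f0 / (c : ℝ)) :
    C < cA 1 ↔ f0 > (F_B / k) * ((c : ℝ) / ((N : ℝ) + (c : ℝ))) := by
  have hcpos : (0:ℝ) < (c:ℝ) := by positivity
  have hc2' : (2:ℝ) ≤ (c:ℝ) := by exact_mod_cast hc2
  have hcN' : 2 * (c:ℝ) ≤ (N:ℝ) := by exact_mod_cast hcN
  have hN' : (3:ℝ) < (N:ℝ) := by exact_mod_cast hN
  have hkpos : (0:ℝ) < k := lt_of_lt_of_le one_pos hk
  have hNc : (0:ℝ) < (N:ℝ) + (c:ℝ) := by positivity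
  have hd1 : (0:ℝ) < (N:ℝ) - (c:ℝ) - 1 := by linarith
  rw [hC, hcA, hd, gt_iff_lt]
  norm_num
  rw [div_mul_div_comm, div_lt_iff₀ (by positivity), sub_lt_comm, lt_div_iff₀ hcpos]
  constructor
  · intro h
    by_contra hcon
    push_neg at hcon
    have h2 := mul_le_mul_of_nonneg_left hcon hd1.le
    nlinarith [h, h2]
  · intro h
    have h2 := mul_lt_mul_of_pos_left h hd1
    nlinarith [h2]
end

section
/- Let N > 3, 2 ≤ c ≤ N/2, d = N - c, F_B > 0, k ≥ 1, f_0 ≥ 0. With C = d·F_B + (c-1)·k·f_0 - d·(d-1)·k·f_0/c and c_A(b) = b·F_B + (c-1)·k·f_0 + (d-b)·2k·f_0 - b·(b-1)·k·f_0/c, we have C < c_A(d-1) if and only if f_0 > (F_B/k)·(c/(2N-2)). -/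
theorem bipartite_deviationA_corner_top
    (N c : ℕ) (hN : 3 < N) (hc2 : 2 ≤ c) (hcN : 2 * c ≤ N)
    (F_B k f0 : ℝ) (hF : 0 < F_B) (hk : 1 ≤ k) (hf : 0 ≤ f0)
    (d : ℝ) (hd : d = (N : ℝ) - (c : ℝ))
    (C : ℝ) (hC : C = d * F_B + ((c : ℝ) - 1) * k * f0 - d * (d - 1) * k * f0 / (c : ℝ))
    (cA : ℝ → ℝ)
    (hcA : ∀ b : ℝ, cA b = b * F_B + ((c : ℝ) - 1) * k * f0 + (d - b) * 2 * k * f0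
        - b * (b - 1) * k * f0 / (c : ℝ)) :
    C < cA (d - 1) ↔ f0 > (F_B / k) * ((c : ℝ) / (2 * (N : ℝ) - 2)) := by
  have hc0 : (0:ℝ) < (c:ℝ) := by exact_mod_cast Nat.lt_of_lt_of_le two_pos hc2
  have hk0 : (0:ℝ) < k := lt_of_lt_of_le one_pos hk
  have hN4 : (4:ℝ) ≤ (N:ℝ) := by exact_mod_cast hN
  have hden : (0:ℝ) < 2 * (N:ℝ) - 2 := by linarith
  rw [hC, hcA, hd, gt_iff_lt, div_mul_div_comm,
    div_lt_iff₀ (by positivity : (0:ℝ) < k * (2 * (N:ℝ) - 2)),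
    ← sub_pos, ← sub_pos, ← mul_pos_iff_of_pos_right hc0]
  have hkey : (((N:ℝ) - (c:ℝ) - 1) * F_B + ((c:ℝ) - 1) * k * f0 +
      ((N:ℝ) - (c:ℝ) - ((N:ℝ) - (c:ℝ) - 1)) * 2 * k * f0 -
      ((N:ℝ) - (c:ℝ) - 1) * ((N:ℝ) - (c:ℝ) - 1 - 1) * k * f0 / (c:ℝ) -
      (((N:ℝ) - (c:ℝ)) * F_B + ((c:ℝ) - 1) * k * f0 -
        ((N:ℝ) - (c:ℝ)) * ((N:ℝ) - (c:ℝ) - 1) * k * f0 / (c:ℝ)) - 0) * (c:ℝ)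
      = f0 * (k * (2 * (N:ℝ) - 2)) - F_B * (c:ℝ) := by
    field_simp
    ring
  rw [hkey]
  constructor <;> intro h <;> linarith
end

section
/- Let N > 3, 2 ≤ c ≤ N/2, d = N - c, F_B > 0, k ≥ 1, f_0 ≥ 0. In K_{c,d}, with C = d·F_B + (c-1)·k·f_0 - d·(d-1)·k·f_0/c and c_C(a) = a·F_B + d·k·f_0 + (c-1-a)·2k·f_0 - a·(a-1)·k·f_0/(d+1), we have C < c_C(1) if and only if f_0 > (F_B/k)·(cN - c² - c)/(N² - cN - N + c² - 2c). -/
theorem bipartite_deviationC_corner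
    (N c : ℕ) (hN : 3 < N) (hc2 : 2 ≤ c) (hcN : 2 * c ≤ N)
    (F_B k f0 : ℝ) (hF : 0 < F_B) (hk : 1 ≤ k) (hf : 0 ≤ f0)
    (d : ℝ) (hd : d = (N : ℝ) - (c : ℝ))
    (hden : 0 < (N : ℝ) ^ 2 - (c : ℝ) * N - N + (c : ℝ) ^ 2 - 2 * c)
    (C : ℝ) (hC : C = d * F_B + ((c : ℝ) - 1) * k * f0 - d * (d - 1) * k * f0 / (c : ℝ))
    (cC : ℝ → ℝ)
    (hcC : ∀ a : ℝ, cC a = a * F_B + d * k * f0 + ((c : ℝ) - 1 - a) * 2 * k * f0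
        - a * (a - 1) * k * f0 / (d + 1)) :
    C < cC 1 ↔
      f0 > (F_B / k) * (((c : ℝ) * N - (c : ℝ) ^ 2 - c)
        / ((N : ℝ) ^ 2 - (c : ℝ) * N - N + (c : ℝ) ^ 2 - 2 * c)) := by
  have hc2' : (2:ℝ) ≤ (c:ℝ) := by exact_mod_cast hc2
  have hc0 : (0:ℝ) < (c:ℝ) := by linarith
  have hk0 : (0:ℝ) < k := by linarith
  have hkD : (0:ℝ) < k * ((N : ℝ) ^ 2 - (c : ℝ) * N - N + (c : ℝ) ^ 2 - 2 * c) :=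
    mul_pos hk0 hden
  subst hd hC
  rw [hcC 1]
  have h0 : (1:ℝ) * (1 - 1) * k * f0 / (((N:ℝ) - (c:ℝ)) + 1) = 0 := by norm_num
  rw [h0, sub_zero, gt_iff_lt, div_mul_div_comm, div_lt_iff₀ hkD]
  have e1 : ((N:ℝ) - c) * (((N:ℝ) - c) - 1) * k * f0 / (c:ℝ) * (c:ℝ)
      = ((N:ℝ) - c) * (((N:ℝ) - c) - 1) * k * f0 := div_mul_cancel₀ _ hc0.ne'
  constructor <;> intro h
  · nlinarith [mul_lt_mul_of_pos_right h hc0, e1]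
  · nlinarith [h, e1, hc0]
end

section
/- Let N > 3, 2 ≤ c ≤ N/2, d = N - c, F_B > 0, k ≥ 1, f_0 ≥ 0. In K_{c,d}, an outer node's cost is D = (d-1)·k·f_0 - c·(c-1)·k·f_0/d, and its deviation cost is d(b) = b·F_B + (d-1-b)·k·f_0 - c·(c-1)·k·f_0/d - b·(b-1)·k·f_0/(c+1). Then D < d(1) iff f_0 < F_B/k, and D < d(d-1) iff f_0 < (F_B/k)·((c+1)/(N-1)). -/
theorem bipartite_deviationD
    (N c : ℕ) (hN : 3 < N) (hc2 : 2 ≤ c) (hcN : 2 * c ≤ N)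
    (F_B k f0 : ℝ) (hF : 0 < F_B) (hk : 1 ≤ k) (hf : 0 ≤ f0)
    (d : ℝ) (hd : d = (N : ℝ) - (c : ℝ))
    (D : ℝ) (hD : D = (d - 1) * k * f0 - (c : ℝ) * ((c : ℝ) - 1) * k * f0 / d)
    (dev : ℝ → ℝ)
    (hdev : ∀ b : ℝ, dev b = b * F_B + (d - 1 - b) * k * f0
        - (c : ℝ) * ((c : ℝ) - 1) * k * f0 / d - b * (b - 1) * k * f0 / ((c : ℝ) + 1)) :
    (D < dev 1 ↔ f0 < F_B / k) ∧
    (D < dev (d - 1) ↔ f0 < (F_B / k) * (((c : ℝ) + 1) / ((N : ℝ) - 1))) := by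
  have hk0 : (0:ℝ) < k := lt_of_lt_of_le one_pos hk
  have hc1 : (0:ℝ) < (c:ℝ) + 1 := by positivity
  have hcr : (2:ℝ) ≤ (c:ℝ) := by exact_mod_cast hc2
  have hNc : 2 * (c:ℝ) ≤ (N:ℝ) := by exact_mod_cast hcN
  have hNr : (3:ℝ) < (N:ℝ) := by exact_mod_cast hN
  have hd2 : (2:ℝ) ≤ d := by rw [hd]; linarith
  have hN1 : (0:ℝ) < (N:ℝ) - 1 := by linarith
  constructor
  · have key : dev 1 - D = F_B - k * f0 := by rw [hdev, hD]; ring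
    constructor
    · intro h; rw [lt_div_iff₀ hk0]; nlinarith [key]
    · intro h; rw [lt_div_iff₀ hk0] at h; nlinarith [key]
  · have key : dev (d-1) - D
        = ((d-1)/((c:ℝ)+1)) * (F_B*((c:ℝ)+1) - k*f0*((N:ℝ)-1)) := by
      rw [hdev, hD, hd]; field_simp; ring
    have hdp : (0:ℝ) < (d-1)/((c:ℝ)+1) := div_pos (by linarith) hc1
    have heq : (F_B/k) * (((c:ℝ)+1)/((N:ℝ)-1)) = (F_B*((c:ℝ)+1))/(k*((N:ℝ)-1)) := by
      rw [div_mul_div_comm]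
    rw [heq, lt_div_iff₀ (by positivity : (0:ℝ) < k*((N:ℝ)-1))]
    constructor
    · intro h
      have h2 : 0 < ((d-1)/((c:ℝ)+1)) * (F_B*((c:ℝ)+1) - k*f0*((N:ℝ)-1)) := by linarith
      by_contra hcon
      push_neg at hcon
      nlinarith
    · intro h
      have h3 : 0 < F_B*((c:ℝ)+1) - k*f0*((N:ℝ)-1) := by nlinarith
      nlinarith [mul_pos hdp h3]
end

section
/- Let N > 3 and 2 ≤ c ≤ N/2 be naturals. Then (cN - c² - c)/(N² - cN - N + c² - 2c) < (c+1)/(N-1); i.e., one of the lower bounds for the complete bipartite Nash equilibrium is strictly below the binding upper bound. -/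
theorem bipartite_bound_comparison_C
    (N c : ℕ) (hN : 3 < N) (hc2 : 2 ≤ c) (hcN : 2 * c ≤ N) :
    ((c : ℝ) * N - (c : ℝ) ^ 2 - c) / ((N : ℝ) ^ 2 - (c : ℝ) * N - N + (c : ℝ) ^ 2 - 2 * c)
      < ((c : ℝ) + 1) / ((N : ℝ) - 1) := by
  have hNr : (4 : ℝ) ≤ N := by exact_mod_cast hN
  have hcr : (2 : ℝ) ≤ c := by exact_mod_cast hc2
  have hcNr : 2 * (c : ℝ) ≤ N := by exact_mod_cast hcN
  have hd1 : (0 : ℝ) < (N : ℝ) ^ 2 - (c : ℝ) * N - N + (c : ℝ) ^ 2 - 2 * c := by nlinarith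
  have hd2 : (0 : ℝ) < (N : ℝ) - 1 := by linarith
  rw [div_lt_div_iff₀ hd1 hd2]
  nlinarith [sq_nonneg ((N:ℝ) - c), sq_nonneg ((N:ℝ) - 2*c), mul_pos hd1 hd2]
end
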